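/- For the α-partial SWAP gate U_PS(α) = cos(α/2)·id + i·sin(α/2)·U_SWAP on two qubits, the induced steering-like POVM assemblage G_{B|A} = Tr_A[U_PS(α)† (id ⊗ F_B) U_PS(α) (id ⊗ ρ_A)] can be rewritten as G_{b|a} = cos²(α/2)·Tr(F_b ρ_a)·id + sin²(α/2)·F_b − i·sin(α/2)cos(α/2)·[F_b, ρ_a]. -/

import Mathlib

open scoped Kronecker ComplexOrder
open Finset Matrix

/-- Partial trace over the second tensor factor. -/
noncomputable def ptSnd {m n : Type} [Fintype n] (M : Matrix (m × n) (m × n) ℂ) :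
    Matrix m m ℂ :=
  Matrix.of fun i j => ∑ k : n, M (i, k) (j, k)

/-- The two-qubit SWAP unitary. -/
def Uswap : Matrix (Fin 2 × Fin 2) (Fin 2 × Fin 2) ℂ :=
  Matrix.of fun x y => if x.1 = y.2 ∧ x.2 = y.1 then 1 else 0

/-- The α-partial SWAP gate `U_PS(α) = cos(α/2)·id + i·sin(α/2)·U_SWAP`. -/
noncomputable def UPS (α : ℝ) : Matrix (Fin 2 × Fin 2) (Fin 2 × Fin 2) ℂ :=
  ((Real.cos (α / 2) : ℝ) : ℂ) • (1 : Matrix (Fin 2 × Fin 2) (Fin 2 × Fin 2) ℂ)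
    + (Complex.I * ((Real.sin (α / 2) : ℝ) : ℂ)) • Uswap

/-!
Write `U_PS(α) = c + i s S` with `S` the swap, which is self-adjoint. Then
`U† (1 ⊗ F) U = c² (1 ⊗ F) + s² S (1 ⊗ F) S + i s c ((1 ⊗ F) S - S (1 ⊗ F))`, and conjugating by `S`
exchanges the tensor factors, so every term becomes `A ⊗ B` or `S (A ⊗ B)`. Tracing out the second
factor sends `A ⊗ B` to `Tr B · A` and `S (A ⊗ B)` to `B A`; with `Tr ρ = 1` this gives the
three terms of the formula.
-/

section PartialTrace

variable {m n : Type} [Fintype n]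

lemma ptSnd_add (M N : Matrix (m × n) (m × n) ℂ) : ptSnd (M + N) = ptSnd M + ptSnd N := by
  ext i j
  simp [ptSnd, Finset.sum_add_distrib]

lemma ptSnd_sub (M N : Matrix (m × n) (m × n) ℂ) : ptSnd (M - N) = ptSnd M - ptSnd N := by
  ext i j
  simp [ptSnd, Finset.sum_sub_distrib]

lemma ptSnd_smul (c : ℂ) (M : Matrix (m × n) (m × n) ℂ) : ptSnd (c • M) = c • ptSnd M := by
  ext i j
  simp [ptSnd, Finset.mul_sum]

lemma ptSnd_kronecker (A : Matrix m m ℂ) (B : Matrix n n ℂ) : ptSnd (A ⊗ₖ B) = B.trace • A := by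
  ext i j
  simp [ptSnd, Matrix.trace, Finset.mul_sum, mul_comm]

end PartialTrace

lemma conjTranspose_mul_mul_of_isHermitian {ι : Type} [Fintype ι] [DecidableEq ι]
    (c s : ℝ) {S : Matrix ι ι ℂ} (hS : S.IsHermitian) (X : Matrix ι ι ℂ) :
    ((c : ℂ) • (1 : Matrix ι ι ℂ) + (Complex.I * s) • S)ᴴ * X * ((c : ℂ) • 1 + (Complex.I * s) • S)
      = ((c ^ 2 : ℝ) : ℂ) • X + ((s ^ 2 : ℝ) : ℂ) • (S * X * S)
        + (Complex.I * s * c) • (X * S - S * X) := by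
  simp only [conjTranspose_add, conjTranspose_smul, conjTranspose_one, hS.eq, star_mul',
    Complex.star_def, Complex.conj_I, Complex.conj_ofReal, add_mul, mul_add, smul_mul_assoc,
    mul_smul_comm, one_mul, mul_one, smul_sub]
  match_scalars <;> ring_nf
  rw [Complex.I_sq]
  ring

def swapMatrix (n : Type) [DecidableEq n] : Matrix (n × n) (n × n) ℂ :=
  Matrix.of fun x y => if x.1 = y.2 ∧ x.2 = y.1 then 1 else 0

section Swap

variable {n : Type} [DecidableEq n]

lemma swapMatrix_apply (x y : n × n) :
    swapMatrix n x y = if x.1 = y.2 ∧ x.2 = y.1 then 1 else 0 := rfl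

lemma isHermitian_swapMatrix : (swapMatrix n).IsHermitian := by
  ext x y
  simp only [conjTranspose_apply, swapMatrix_apply]
  split_ifs <;> simp_all

variable [Fintype n]

lemma swapMatrix_mul_apply (M : Matrix (n × n) (n × n) ℂ) (x y : n × n) :
    (swapMatrix n * M) x y = M (x.2, x.1) y := by
  simp [mul_apply, swapMatrix_apply, Fintype.sum_prod_type, ite_and]

lemma mul_swapMatrix_apply (M : Matrix (n × n) (n × n) ℂ) (x y : n × n) :
    (M * swapMatrix n) x y = M x (y.2, y.1) := by
  simp [mul_apply, swapMatrix_apply, Fintype.sum_prod_type, ite_and]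

lemma swapMatrix_mul_kronecker_mul_swapMatrix (A B : Matrix n n ℂ) :
    swapMatrix n * (A ⊗ₖ B) * swapMatrix n = B ⊗ₖ A := by
  ext x y
  simp [mul_swapMatrix_apply, swapMatrix_mul_apply, mul_comm]

lemma kronecker_mul_swapMatrix (A B : Matrix n n ℂ) :
    (A ⊗ₖ B) * swapMatrix n = swapMatrix n * (B ⊗ₖ A) := by
  ext x y
  simp [mul_swapMatrix_apply, swapMatrix_mul_apply, mul_comm]

lemma ptSnd_swapMatrix_mul_kronecker (A B : Matrix n n ℂ) :
    ptSnd (swapMatrix n * (A ⊗ₖ B)) = B * A := by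
  ext i j
  simp only [ptSnd, of_apply, swapMatrix_mul_apply]
  simp [mul_apply, mul_comm]

end Swap

lemma Uswap_eq_swapMatrix : Uswap = swapMatrix (Fin 2) := rfl

theorem stmt_13_general (α : ℝ)
    (ρ : Fin 2 → Matrix (Fin 2) (Fin 2) ℂ)
    (hρ : ∀ a, (ρ a).PosSemidef ∧ (ρ a).trace = 1)
    (F : Fin 2 → Matrix (Fin 2) (Fin 2) ℂ) :
    ∀ (a b : Fin 2),
      ptSnd ((UPS α)ᴴ * ((1 : Matrix (Fin 2) (Fin 2) ℂ) ⊗ₖ F b) * UPS α *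
          ((1 : Matrix (Fin 2) (Fin 2) ℂ) ⊗ₖ ρ a))
      = (((Real.cos (α / 2) ^ 2 : ℝ) : ℂ) * (F b * ρ a).trace) •
          (1 : Matrix (Fin 2) (Fin 2) ℂ)
        + ((Real.sin (α / 2) ^ 2 : ℝ) : ℂ) • F b
        - (Complex.I * ((Real.sin (α / 2) : ℝ) : ℂ) * ((Real.cos (α / 2) : ℝ) : ℂ)) •
            (F b * ρ a - ρ a * F b) := by
  intro a b
  rw [UPS, Uswap_eq_swapMatrix, conjTranspose_mul_mul_of_isHermitian _ _ isHermitian_swapMatrix,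
    swapMatrix_mul_kronecker_mul_swapMatrix, kronecker_mul_swapMatrix]
  simp only [add_mul, sub_mul, smul_mul_assoc, mul_assoc, ← mul_kronecker_mul, one_mul, mul_one,
    ptSnd_add, ptSnd_sub, ptSnd_smul, ptSnd_kronecker, ptSnd_swapMatrix_mul_kronecker, (hρ a).2,
    one_smul, smul_smul]
  module

/-- For the α-partial SWAP gate, the induced steering-like POVM
assemblage `G_{b|a} = Tr_A[U_PS(α)† (id ⊗ F_b) U_PS(α) (id ⊗ ρ_a)]` (trace over
the second, "A", tensor factor; the environment `E` is the first factor) can be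
rewritten as
`G_{b|a} = cos²(α/2)·Tr(F_b ρ_a)·id + sin²(α/2)·F_b − i·sin(α/2)cos(α/2)·[F_b, ρ_a]`. -/
theorem stmt_13 (α : ℝ)
    (ρ : Fin 2 → Matrix (Fin 2) (Fin 2) ℂ)
    (hρ : ∀ a, (ρ a).PosSemidef ∧ (ρ a).trace = 1)
    (F : Fin 2 → Matrix (Fin 2) (Fin 2) ℂ)
    (hF : ∀ b, (F b).PosSemidef) (hF1 : ∑ b, F b = 1) :
    ∀ (a b : Fin 2),
      ptSnd ((UPS α)ᴴ * ((1 : Matrix (Fin 2) (Fin 2) ℂ) ⊗ₖ F b) * UPS α *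
          ((1 : Matrix (Fin 2) (Fin 2) ℂ) ⊗ₖ ρ a))
      = (((Real.cos (α / 2) ^ 2 : ℝ) : ℂ) * (F b * ρ a).trace) •
          (1 : Matrix (Fin 2) (Fin 2) ℂ)
        + ((Real.sin (α / 2) ^ 2 : ℝ) : ℂ) • F b
        - (Complex.I * ((Real.sin (α / 2) : ℝ) : ℂ) * ((Real.cos (α / 2) : ℝ) : ℂ)) •
            (F b * ρ a - ρ a * F b) :=
  stmt_13_general α ρ hρ F
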